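/- arXiv:1803.06119 — 10 statements merged into one kernel-verified Lean document; each statement's English description precedes it below -/
import Mathlib

section
/- Let (P, ≤₁, ≤₂) be a weak plane poset. Then the relation ≪ defined on P by (x ≪ y if and only if y ≤₁ x or x ≤₂ y) is a total order on P, i.e. it is reflexive, transitive, antisymmetric, and any two elements of P are comparable for ≪. -/
/-- A total quasi-order: reflexive, transitive, and any two elements are comparable. -/
def IsTotalQuasiorder {α : Type*} (r : α → α → Prop) : Prop :=
  (∀ x, r x x) ∧ (∀ x y z, r x y → r y z → r x z) ∧ (∀ x y, r x y ∨ r y x)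

/-- A weak plane poset: a double poset (two partial orders) such that
(1) `x ≤₁ y` and `x ≤₂ y` imply `x = y`, and
(2) the relation `⪯` given by (`x ≤₁ y` or `x ≤₂ y`) is a total quasi-order. -/
def WeakPlanePoset {α : Type*} (le1 le2 : α → α → Prop) : Prop :=
  IsPartialOrder α le1 ∧ IsPartialOrder α le2 ∧
    (∀ x y, le1 x y → le2 x y → x = y) ∧
    IsTotalQuasiorder (fun x y => le1 x y ∨ le2 x y)

/-- For a weak plane poset `(P, ≤₁, ≤₂)`, the relation `≪` defined by
`x ≪ y ↔ (y ≤₁ x or x ≤₂ y)` is a total order (reflexive, transitive, antisymmetric,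
and any two elements are comparable). -/
theorem weak_plane_poset_ll_isLinearOrder {α : Type*} [Fintype α]
    (le1 le2 : α → α → Prop) (h : WeakPlanePoset le1 le2) :
    IsLinearOrder α (fun x y => le1 y x ∨ le2 x y) := by
  obtain ⟨h1, h2, hmix, _, _, htot⟩ := h
  have t1 : ∀ a b c, le1 a b → le1 b c → le1 a c := fun a b c => h1.trans a b c
  have t2 : ∀ a b c, le2 a b → le2 b c → le2 a c := fun a b c => h2.trans a b c
  refine { refl := fun x => Or.inl (h1.refl x), trans := ?_, antisymm := ?_, total := ?_ }
  · rintro x y z (hxy | hxy) (hyz | hyz)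
    · exact Or.inl (t1 _ _ _ hyz hxy)
    · -- le1 y x, le2 y z
      rcases htot x z with (h1xz | h2xz) | (h1zx | h2zx)
      · have : le1 y z := t1 _ _ _ hxy h1xz
        have := hmix _ _ this hyz  -- y = z
        exact Or.inl (this ▸ hxy)
      · exact Or.inr h2xz
      · exact Or.inl h1zx
      · have : le2 y x := t2 _ _ _ hyz h2zx
        have := hmix _ _ hxy this  -- y = x
        exact Or.inr (this ▸ hyz)
    · -- le2 x y, le1 z y
      rcases htot x z with (h1xz | h2xz) | (h1zx | h2zx)
      · have : le1 x y := t1 _ _ _ h1xz hyz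
        have := hmix _ _ this hxy  -- x = y
        exact Or.inl (this ▸ hyz)
      · exact Or.inr h2xz
      · exact Or.inl h1zx
      · have : le2 z y := t2 _ _ _ h2zx hxy
        have := hmix _ _ hyz this  -- z = y
        exact Or.inr (this.symm ▸ hxy)
    · exact Or.inr (t2 _ _ _ hxy hyz)
  · rintro x y (hxy | hxy) (hyx | hyx)
    · exact h1.antisymm _ _ hyx hxy
    · exact (hmix _ _ hxy hyx).symm
    · exact hmix _ _ hyx hxy
    · exact h2.antisymm _ _ hxy hyx
  · intro x y
    rcases htot x y with (hx | hx) | (hx | hx)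
    · exact Or.inr (Or.inl hx)
    · exact Or.inl (Or.inr hx)
    · exact Or.inl (Or.inl hx)
    · exact Or.inr (Or.inr hx)
end

section
/- Every plane poset is a weak plane poset: if (P, ≤₁, ≤₂) is a plane poset, then for all x, y ∈ P, (x ≤₁ y and x ≤₂ y) implies x = y, and the relation ⪯ defined by (x ⪯ y if and only if x ≤₁ y or x ≤₂ y) is a total order (hence in particular a total quasi-order). -/
/-- A plane poset: a double poset such that any two elements comparable for both `≤₁`
and `≤₂` are equal, and any two elements are comparable for `≤₁` or for `≤₂`. -/
def PlanePoset {α : Type*} (le1 le2 : α → α → Prop) : Prop :=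
  IsPartialOrder α le1 ∧ IsPartialOrder α le2 ∧
    (∀ x y, (le1 x y ∨ le1 y x) → (le2 x y ∨ le2 y x) → x = y) ∧
    (∀ x y, (le1 x y ∨ le1 y x) ∨ (le2 x y ∨ le2 y x))

/-- Every plane poset is a weak plane poset; moreover the relation `⪯`
(defined by `x ⪯ y ↔ x ≤₁ y or x ≤₂ y`) is a total order. -/
theorem plane_poset_is_weak_plane {α : Type*} [Fintype α]
    (le1 le2 : α → α → Prop) (h : PlanePoset le1 le2) :
    (∀ x y, le1 x y → le2 x y → x = y) ∧
      IsLinearOrder α (fun x y => le1 x y ∨ le2 x y) := by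

  obtain ⟨h1, h2, hsingle, htot⟩ := h
  have refl1 := h1.refl
  have refl2 := h2.refl
  have anti : ∀ x y, le1 x y ∨ le2 x y → le1 y x ∨ le2 y x → x = y := by
    rintro x y (hxy | hxy) (hyx | hyx)
    · exact h1.antisymm _ _ hxy hyx
    · exact hsingle x y (Or.inl hxy) (Or.inr hyx)
    · exact hsingle x y (Or.inr hyx) (Or.inl hxy)
    · exact h2.antisymm _ _ hxy hyx
  have trans : ∀ x y z, (le1 x y ∨ le2 x y) → (le1 y z ∨ le2 y z) →
      (le1 x z ∨ le2 x z) := by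
    rintro x y z (hxy | hxy) (hyz | hyz)
    · exact Or.inl (h1.trans _ _ _ hxy hyz)
    · rcases htot x z with (hxz | hzx) | (hxz | hzx)
      · exact Or.inl hxz
      · have : y = z := hsingle y z (Or.inr (h1.trans _ _ _ hzx hxy)) (Or.inl hyz)
        exact Or.inl (this ▸ hxy)
      · exact Or.inr hxz
      · have : x = y := hsingle x y (Or.inl hxy) (Or.inr (h2.trans _ _ _ hyz hzx))
        exact Or.inr (this ▸ hyz)
    · rcases htot x z with (hxz | hzx) | (hxz | hzx)
      · exact Or.inl hxz
      · have : x = y := hsingle x y (Or.inr (h1.trans _ _ _ hyz hzx)) (Or.inl hxy)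
        exact Or.inl (this ▸ hyz)
      · exact Or.inr hxz
      · have : y = z := hsingle y z (Or.inl hyz) (Or.inr (h2.trans _ _ _ hzx hxy))
        exact Or.inr (this ▸ hxy)
    · exact Or.inr (h2.trans _ _ _ hxy hyz)
  refine ⟨fun x y hx hy => hsingle x y (Or.inl hx) (Or.inl hy), ?_⟩
  exact
    { refl := fun x => Or.inl (refl1 x)
      trans := trans
      antisymm := anti
      total := fun x y => by
        rcases htot x y with (hxy | hyx) | (hxy | hyx)
        · exact Or.inl (Or.inl hxy)
        · exact Or.inr (Or.inl hyx)
        · exact Or.inl (Or.inr hxy)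
        · exact Or.inr (Or.inr hyx) }
end

section
/- Let (P, ≤₁, ≤₂) be a weak plane poset. Then the total quasi-order ⪯ (defined by x ⪯ y iff x ≤₁ y or x ≤₂ y) is antisymmetric (i.e. is a partial order) if and only if (P, ≤₁, ≤₂) is a plane poset. -/
/-- For a weak plane poset `(P, ≤₁, ≤₂)`, the total quasi-order `⪯`
is antisymmetric (i.e. a partial order) if and only if `(P, ≤₁, ≤₂)` is a plane poset. -/
theorem weak_plane_prec_antisymm_iff_plane {α : Type*} [Fintype α]
    (le1 le2 : α → α → Prop) (h : WeakPlanePoset le1 le2) :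
    (∀ x y, (le1 x y ∨ le2 x y) → (le1 y x ∨ le2 y x) → x = y) ↔
      PlanePoset le1 le2 := by
  obtain ⟨h1, h2, h3, _, _, htot⟩ := h
  constructor
  · intro anti
    refine ⟨h1, h2, ?_, ?_⟩
    · rintro x y (hxy | hyx) (hxy2 | hyx2)
      · exact h3 x y hxy hxy2
      · exact anti x y (Or.inl hxy) (Or.inr hyx2)
      · exact anti x y (Or.inr hxy2) (Or.inl hyx)
      · exact (h3 y x hyx hyx2).symm
    · intro x y
      rcases htot x y with (h' | h') | (h' | h')
      · exact Or.inl (Or.inl h')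
      · exact Or.inr (Or.inl h')
      · exact Or.inl (Or.inr h')
      · exact Or.inr (Or.inr h')
  · rintro ⟨_, _, hp, _⟩ x y (hxy | hxy) (hyx | hyx)
    · exact h1.antisymm x y hxy hyx
    · exact hp x y (Or.inl hxy) (Or.inr hyx)
    · exact hp x y (Or.inr hyx) (Or.inl hxy)
    · exact h2.antisymm x y hxy hyx
end

section
/- Let w be a packed word of length n. Then the double poset P_w = ([n], ≤₁, ≤₂), defined by (i ≤₁ j iff i ≥ j and w(i) ≤ w(j)) and (i ≤₂ j iff i ≤ j and w(i) ≤ w(j)), is a weak plane poset; moreover its total quasi-order ⪯ satisfies, for all i, j ∈ [n], i ⪯ j if and only if w(i) ≤ w(j). In particular ≤₁ and ≤₂ are partial orders on [n]. -/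
/-- A packed word of length `n`: a map `w : [n] → ℕ` whose set of values is exactly
`{1, ..., k}` for some `k ≥ 0`. -/
def IsPacked {n : ℕ} (w : Fin n → ℕ) : Prop :=
  ∃ k, Set.range w = Set.Icc 1 k

/-- For a packed word `w` of length `n`, the double poset
`P_w = ([n], ≤₁, ≤₂)` with `i ≤₁ j ↔ (i ≥ j and w i ≤ w j)` and
`i ≤₂ j ↔ (i ≤ j and w i ≤ w j)` is a weak plane poset (in particular `≤₁`, `≤₂` are
partial orders), and its total quasi-order `⪯` satisfies `i ⪯ j ↔ w i ≤ w j`. -/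
theorem packed_word_weak_plane_poset {n : ℕ} (w : Fin n → ℕ) (hw : IsPacked w) :
    WeakPlanePoset (fun i j : Fin n => j ≤ i ∧ w i ≤ w j)
      (fun i j : Fin n => i ≤ j ∧ w i ≤ w j) ∧
    ∀ i j : Fin n,
      ((j ≤ i ∧ w i ≤ w j) ∨ (i ≤ j ∧ w i ≤ w j)) ↔ w i ≤ w j := by
  refine ⟨⟨?_, ?_, ?_, ?_⟩, ?_⟩
  · exact { refl := fun x => ⟨le_refl x, le_refl _⟩
            trans := fun x y z h1 h2 => ⟨le_trans h2.1 h1.1, le_trans h1.2 h2.2⟩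
            antisymm := fun x y h1 h2 => le_antisymm h2.1 h1.1 }
  · exact { refl := fun x => ⟨le_refl x, le_refl _⟩
            trans := fun x y z h1 h2 => ⟨le_trans h1.1 h2.1, le_trans h1.2 h2.2⟩
            antisymm := fun x y h1 h2 => le_antisymm h1.1 h2.1 }
  · exact fun x y h1 h2 => le_antisymm h2.1 h1.1
  · refine ⟨fun x => Or.inl ⟨le_refl x, le_refl _⟩, ?_, ?_⟩
    · intro x y z h1 h2
      have hxy : w x ≤ w y := h1.elim And.right And.right
      have hyz : w y ≤ w z := h2.elim And.right And.right
      rcases le_total z x with h | h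
      · exact Or.inl ⟨h, le_trans hxy hyz⟩
      · exact Or.inr ⟨h, le_trans hxy hyz⟩
    · intro x y
      rcases le_total (w x) (w y) with h | h
      · rcases le_total x y with h' | h'
        · exact Or.inl (Or.inr ⟨h', h⟩)
        · exact Or.inl (Or.inl ⟨h', h⟩)
      · rcases le_total x y with h' | h'
        · exact Or.inr (Or.inl ⟨h', h⟩)
        · exact Or.inr (Or.inr ⟨h', h⟩)
  · intro i j
    constructor
    · exact fun h => h.elim And.right And.right
    · intro h
      rcases le_total i j with h' | h'
      · exact Or.inr ⟨h', h⟩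
      · exact Or.inl ⟨h', h⟩
end

section
/- Let w and w' be packed words of lengths n and n' respectively. If the double posets P_w and P_{w'} are isomorphic (i.e. there is a bijection f : [n] → [n'] such that for all i, j, i ≤₁ j iff f(i) ≤₁' f(j), and i ≤₂ j iff f(i) ≤₂' f(j)), then n = n', the isomorphism f is the identity of [n], and w = w'. -/
/-- Two packed words with the same comparison preorder are equal. -/
lemma packed_eq_of_cmp {n : ℕ} (w v : Fin n → ℕ) (hw : IsPacked w) (hv : IsPacked v)
    (h : ∀ i j, w i ≤ w j ↔ v i ≤ v j) : ∀ i, w i = v i := by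
  obtain ⟨k, hk⟩ := hw
  obtain ⟨k', hk'⟩ := hv
  have hwmem : ∀ i, w i ∈ Set.Icc 1 k := fun i => hk ▸ Set.mem_range_self i
  have hvmem : ∀ i, v i ∈ Set.Icc 1 k' := fun i => hk' ▸ Set.mem_range_self i
  have key : ∀ m, ∀ i : Fin n, w i = m → v i = m := by
    intro m
    induction m using Nat.strong_induction_on with
    | _ m IH =>
      intro i hi
      have h1m : 1 ≤ m := hi ▸ (hwmem i).1
      have hmk : m ≤ k := hi ▸ (hwmem i).2
      have hvi1 := (hvmem i).1
      have hvik := (hvmem i).2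
      have hge : m ≤ v i := by
        rcases eq_or_lt_of_le h1m with h1 | h1
        · omega
        · have hmem : m - 1 ∈ Set.Icc 1 k := ⟨by omega, by omega⟩
          rw [← hk] at hmem
          obtain ⟨j, hj⟩ := hmem
          have hvj : v j = m - 1 := IH (m - 1) (by omega) j hj
          have hnle : ¬ w i ≤ w j := by omega
          have : ¬ v i ≤ v j := fun hle => hnle ((h i j).mpr hle)
          omega
      rcases eq_or_lt_of_le hge with he | hlt
      · omega
      · have hmem : m ∈ Set.Icc 1 k' := ⟨h1m, by omega⟩
        rw [← hk'] at hmem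
        obtain ⟨j', hj'⟩ := hmem
        have hnle : ¬ v i ≤ v j' := by omega
        have hwle : ¬ w i ≤ w j' := fun hle => hnle ((h i j').mp hle)
        have hlt' : w j' < m := by omega
        have := IH (w j') hlt' j' rfl
        omega
  intro i
  exact (key (w i) i rfl).symm

/-- If `w`, `w'` are packed words of lengths `n`, `n'` and
`f : [n] → [n']` is an isomorphism of the double posets `P_w` and `P_{w'}`
(a bijection preserving and reflecting `≤₁` and `≤₂`, where for `P_w` one has
`i ≤₁ j ↔ (i ≥ j ∧ w i ≤ w j)` and `i ≤₂ j ↔ (i ≤ j ∧ w i ≤ w j)`),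
then `n = n'`, `f` is the identity of `[n]`, and `w = w'`. -/
theorem packed_word_double_poset_rigidity {n n' : ℕ}
    (w : Fin n → ℕ) (w' : Fin n' → ℕ) (hw : IsPacked w) (hw' : IsPacked w')
    (f : Fin n → Fin n') (hf : Function.Bijective f)
    (h1 : ∀ i j : Fin n, (j ≤ i ∧ w i ≤ w j) ↔ (f j ≤ f i ∧ w' (f i) ≤ w' (f j)))
    (h2 : ∀ i j : Fin n, (i ≤ j ∧ w i ≤ w j) ↔ (f i ≤ f j ∧ w' (f i) ≤ w' (f j))) :
    ∃ h : n = n', (∀ i, f i = Fin.cast h i) ∧ ∀ i, w i = w' (Fin.cast h i) := by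
  have hmono : ∀ i j : Fin n, i ≤ j ↔ f i ≤ f j := by
    intro i j
    constructor
    · intro hij
      rcases le_total (w i) (w j) with hw2 | hw2
      · exact ((h2 i j).mp ⟨hij, hw2⟩).1
      · exact ((h1 j i).mp ⟨hij, hw2⟩).1
    · intro hfij
      by_contra hij
      have hji : j ≤ i := le_of_not_ge hij
      have heq : i = j := by
        rcases le_total (w i) (w j) with hw2 | hw2
        · have hfji := ((h1 i j).mp ⟨hji, hw2⟩).1
          exact hf.injective (le_antisymm hfij hfji)
        · have hfji := ((h2 j i).mp ⟨hji, hw2⟩).1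
          exact hf.injective (le_antisymm hfij hfji)
      exact hij (heq ▸ le_refl i)
  have hcomp : ∀ i j : Fin n, w i ≤ w j ↔ w' (f i) ≤ w' (f j) := by
    intro i j
    constructor
    · intro hle
      rcases le_total i j with hij | hij
      · exact ((h2 i j).mp ⟨hij, hle⟩).2
      · exact ((h1 i j).mp ⟨hij, hle⟩).2
    · intro hle
      rcases le_total (f i) (f j) with hij | hij
      · exact ((h2 i j).mpr ⟨hij, hle⟩).2
      · exact ((h1 i j).mpr ⟨hij, hle⟩).2
  have hn : n = n' := by
    simpa using Fintype.card_of_bijective hf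
  subst hn
  have hid : ∀ i, f i = i := by
    let e : Fin n ≃o Fin n :=
      { toEquiv := Equiv.ofBijective f hf
        map_rel_iff' := fun {a b} => (hmono a b).symm }
    have he : e = OrderIso.refl (Fin n) := Subsingleton.elim _ _
    intro i
    have : e i = i := by rw [he]; rfl
    exact this
  have hwf : IsPacked (w' ∘ f) := by
    obtain ⟨k', hk'⟩ := hw'
    exact ⟨k', by rw [Set.range_comp, hf.surjective.range_eq, Set.image_univ, hk']⟩
  have hweq := packed_eq_of_cmp w (w' ∘ f) hw hwf hcomp
  refine ⟨rfl, ?_, ?_⟩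
  · intro i
    simp [hid i]
  · intro i
    simp only [Fin.cast_refl, id_eq]
    rw [hweq i]
    simp [Function.comp, hid i]
end

section
/- Let (P, ≤₁, ≤₂) be a weak plane poset on the set [n] = {1, ..., n} such that the total order ≪ (defined by i ≪ j iff j ≤₁ i or i ≤₂ j) is the natural order on [n]. Let w be the packed word of length n associated to the total quasi-order ⪯ of P, i.e. satisfying (i ⪯ j iff w(i) ≤ w(j)) for all i, j. Then P equals P_w: for all i, j ∈ [n], i ≤₁ j if and only if (i ≥ j and w(i) ≤ w(j)), and i ≤₂ j if and only if (i ≤ j and w(i) ≤ w(j)). Consequently, every weak plane poset is isomorphic to P_w for a unique packed word w. -/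
/-- Let `(P, ≤₁, ≤₂)` be a weak plane poset on `[n]` whose total order `≪`
(given by `i ≪ j ↔ (j ≤₁ i or i ≤₂ j)`) is the natural order of `[n]`, and let `w` be
the packed word associated to the total quasi-order `⪯` of `P` (i.e. `i ⪯ j ↔ w i ≤ w j`).
Then `P = P_w`: `i ≤₁ j ↔ (i ≥ j ∧ w i ≤ w j)` and `i ≤₂ j ↔ (i ≤ j ∧ w i ≤ w j)`. -/
theorem weak_plane_poset_eq_poset_of_its_packed_word {n : ℕ}
    (le1 le2 : Fin n → Fin n → Prop) (h : WeakPlanePoset le1 le2)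
    (hnat : ∀ i j : Fin n, (le1 j i ∨ le2 i j) ↔ i ≤ j)
    (w : Fin n → ℕ) (hw : IsPacked w)
    (hword : ∀ i j : Fin n, (le1 i j ∨ le2 i j) ↔ w i ≤ w j) :
    ∀ i j : Fin n,
      (le1 i j ↔ (j ≤ i ∧ w i ≤ w j)) ∧ (le2 i j ↔ (i ≤ j ∧ w i ≤ w j)) := by
  obtain ⟨h1, h2, hanti, _⟩ := h
  intro i j
  constructor
  · constructor
    · intro hl
      exact ⟨(hnat j i).mp (Or.inl hl), (hword i j).mp (Or.inl hl)⟩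
    · rintro ⟨hji, hwij⟩
      rcases (hword i j).mpr hwij with hl | hl
      · exact hl
      · have : i = j := le_antisymm ((hnat i j).mp (Or.inr hl)) hji
        subst this; exact h1.refl _
  · constructor
    · intro hl
      exact ⟨(hnat i j).mp (Or.inr hl), (hword i j).mp (Or.inr hl)⟩
    · rintro ⟨hij, hwij⟩
      rcases (hword i j).mpr hwij with hl | hl
      · have : j = i := le_antisymm ((hnat j i).mp (Or.inl hl)) hij
        subst this; exact h2.refl _
      · exact hl
end

section
/- Let f and g be permutations of [n] (i.e. bijective packed words of length n). Then f ≤ g (for the order on packed words defined by: f ≤ g iff (for all i ≥ j, f(i) ≤ f(j) implies g(i) ≤ g(j)) and (g(i) = g(j) implies f(i) = f(j))) if and only if for all i, j ∈ [n] with i > j, f(i) < f(j) implies g(i) < g(j); equivalently, if and only if the inversion set {(j, i) : j < i and f(j) > f(i)} of f is contained in the inversion set of g. Hence the restriction of ≤ to the symmetric group S_n is the right weak Bruhat order. -/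
/-- The relation `≤` on packed words of length `n`: `f ≤ g` iff
(1) for all `i ≥ j`, `f i ≤ f j` implies `g i ≤ g j`, and
(2) `g i = g j` implies `f i = f j`. -/
def PWle {n : ℕ} (f g : Fin n → ℕ) : Prop :=
  (∀ i j : Fin n, j ≤ i → f i ≤ f j → g i ≤ g j) ∧
    (∀ i j : Fin n, g i = g j → f i = f j)

/-- The inversion set of a word `h` of length `n`: pairs `(j, i)` with `j < i` and
`h j > h i`. -/
def InvSet {n : ℕ} (h : Fin n → ℕ) : Set (Fin n × Fin n) :=
  {p | p.1 < p.2 ∧ h p.2 < h p.1}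

/-- For permutations `f`, `g` of `[n]` (bijective packed words),
`f ≤ g` iff (for all `i > j`, `f i < f j` implies `g i < g j`), iff the inversion set
of `f` is contained in that of `g`. Hence on `S_n` the order `≤` is the right weak
Bruhat order. -/
theorem PWle_on_permutations_is_right_weak_order {n : ℕ} (f g : Fin n → ℕ)
    (hf : IsPacked f) (hg : IsPacked g)
    (hfinj : Function.Injective f) (hginj : Function.Injective g) :
    (PWle f g ↔ ∀ i j : Fin n, j < i → f i < f j → g i < g j) ∧
    (PWle f g ↔ InvSet f ⊆ InvSet g) := by
  have key : PWle f g ↔ ∀ i j : Fin n, j < i → f i < f j → g i < g j := by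
    constructor
    · rintro ⟨h1, h2⟩ i j hji hfij
      have hle : g i ≤ g j := h1 i j hji.le hfij.le
      rcases lt_or_eq_of_le hle with h | h
      · exact h
      · exact absurd (h2 i j h) hfij.ne
    · intro h
      constructor
      · intro i j hji hfij
        rcases eq_or_lt_of_le hji with rfl | hlt
        · exact le_rfl
        · rcases lt_or_eq_of_le hfij with hlt' | heq
          · exact (h i j hlt hlt').le
          · exact le_of_eq (congrArg g (hfinj heq))
      · intro i j hgij
        exact congrArg f (hginj hgij)
  refine ⟨key, key.trans ?_⟩
  constructor
  · rintro h ⟨j, i⟩ ⟨hji, hfij⟩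
    exact ⟨hji, h i j hji hfij⟩
  · intro h i j hji hfij
    exact (h (show (j, i) ∈ InvSet f from ⟨hji, hfij⟩)).2
end

section
/- Let P be a weak plane poset on [n] (with ≪ the natural order), let f ∈ Lin(P) be a linear extension of P, and let g be a packed word of length n with g ⪯ f for the order ⪯ defined by: g ⪯ f iff (for all i, j, f(i) ≤ f(j) implies g(i) ≤ g(j)) and (for all i < j, f(i) > f(j) implies g(i) > g(j)). Then g is a weak linear extension of P. -/
/-- The equivalence relation `≡` of a weak plane poset:
`x ≡ y` iff `x ⪯ y` and `y ⪯ x`, where `x ⪯ y` iff (`x ≤₁ y` or `x ≤₂ y`). -/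
def WPPEquiv {α : Type*} (le1 le2 : α → α → Prop) (x y : α) : Prop :=
  (le1 x y ∨ le2 x y) ∧ (le1 y x ∨ le2 y x)

/-- A linear extension of a weak plane poset on `[n]` (with `≪` the natural order):
a packed word `f` such that `i ≤₁ j → f i ≤ f j` and `f i = f j → i ≡ j`. -/
def IsLinExt {n : ℕ} (le1 le2 : Fin n → Fin n → Prop) (f : Fin n → ℕ) : Prop :=
  IsPacked f ∧ (∀ i j, le1 i j → f i ≤ f j) ∧
    (∀ i j, f i = f j → WPPEquiv le1 le2 i j)

/-- A weak linear extension of a weak plane poset on `[n]` (with `≪` the natural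
order): a packed word `f` such that `i ≤₁ j → f i ≤ f j` and
(`i ≤₁ j` and `f i = f j`) `→ i ≡ j`. -/
def IsWeakLinExt {n : ℕ} (le1 le2 : Fin n → Fin n → Prop) (f : Fin n → ℕ) : Prop :=
  IsPacked f ∧ (∀ i j, le1 i j → f i ≤ f j) ∧
    (∀ i j, le1 i j → f i = f j → WPPEquiv le1 le2 i j)

/-- The order `⪯` on packed words of length `n` (from Foissy–Malvenuto):
`g ⪯ f` iff (for all `i, j`, `f i ≤ f j` implies `g i ≤ g j`) and
(for all `i < j`, `f i > f j` implies `g i > g j`). -/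
def PWprec {n : ℕ} (g f : Fin n → ℕ) : Prop :=
  (∀ i j : Fin n, f i ≤ f j → g i ≤ g j) ∧
    (∀ i j : Fin n, i < j → f j < f i → g j < g i)

/-- Let `P` be a weak plane poset on `[n]` with `≪` the natural order,
let `f ∈ Lin(P)` and let `g` be a packed word of length `n` with `g ⪯ f`.
Then `g` is a weak linear extension of `P`. -/
theorem weak_lin_ext_of_prec_lin_ext {n : ℕ}
    (le1 le2 : Fin n → Fin n → Prop) (h : WeakPlanePoset le1 le2)
    (hnat : ∀ i j : Fin n, (le1 j i ∨ le2 i j) ↔ i ≤ j)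
    (f : Fin n → ℕ) (hf : IsLinExt le1 le2 f)
    (g : Fin n → ℕ) (hg : IsPacked g) (hgf : PWprec g f) :
    IsWeakLinExt le1 le2 g := by
  obtain ⟨hfp, hf1, hf2⟩ := hf
  obtain ⟨hg1, hg2⟩ := hgf
  refine ⟨hg, fun i j hij => hg1 i j (hf1 i j hij), fun i j hij hgij => ?_⟩
  by_cases heq : i = j
  · subst heq
    exact ⟨Or.inl (h.1.refl i), Or.inl (h.1.refl i)⟩
  · have hji : j ≤ i := (hnat j i).mp (Or.inl hij)
    have hflt : f i ≤ f j := hf1 i j hij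
    rcases eq_or_lt_of_le hflt with hfe | hfe
    · exact hf2 i j hfe
    · have hjlt : j < i := lt_of_le_of_ne hji (fun e => heq e.symm)
      exact absurd hgij (ne_of_lt (hg2 j i hjlt hfe))
end

section
/- Let P be a weak plane poset on [n] (with ≪ the natural order) and let g be a weak linear extension of P. Then there exists a linear extension f ∈ Lin(P) such that g ⪯ f, where ⪯ is the order on packed words of length n defined by: g ⪯ f iff (for all i, j, f(i) ≤ f(j) implies g(i) ≤ g(j)) and (for all i < j, f(i) > f(j) implies g(i) > g(j)). -/
/-- Auxiliary: for `b ∈ S` and `a < b`, the filter of elements `≤ a` is strictly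
smaller than the filter of elements `≤ b`. -/
lemma wpp_rank_strict (S : Finset ℕ) {a b : ℕ} (hb : b ∈ S) (hab : a < b) :
    (S.filter (fun v => v ≤ a)).card < (S.filter (fun v => v ≤ b)).card := by
  apply Finset.card_lt_card
  rw [Finset.ssubset_iff_of_subset]
  · exact ⟨b, Finset.mem_filter.mpr ⟨hb, le_refl b⟩,
      fun hmem => absurd (Finset.mem_filter.mp hmem).2 (not_le.mpr hab)⟩
  · intro x hx
    rw [Finset.mem_filter] at hx ⊢
    exact ⟨hx.1, hx.2.trans hab.le⟩

/-- Auxiliary: ranking the elements of a finite set of naturals yields exactly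
`{1, ..., |S|}`. -/
lemma wpp_rank_image_eq (S : Finset ℕ) :
    S.image (fun a => (S.filter (fun v => v ≤ a)).card) = Finset.Icc 1 S.card := by
  apply Finset.eq_of_subset_of_card_le
  · intro t ht
    simp only [Finset.mem_image] at ht
    obtain ⟨a, ha, rfl⟩ := ht
    refine Finset.mem_Icc.mpr ⟨?_, ?_⟩
    · exact Finset.card_pos.mpr ⟨a, Finset.mem_filter.mpr ⟨ha, le_refl a⟩⟩
    · exact Finset.card_le_card (Finset.filter_subset _ _)
  · rw [Nat.card_Icc]
    simp only [Nat.add_sub_cancel]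
    apply le_of_eq
    symm
    apply Finset.card_image_of_injOn
    intro a ha b hb hab
    by_contra hne
    rcases lt_or_gt_of_ne hne with hlt | hlt
    · exact absurd hab (Nat.ne_of_lt (wpp_rank_strict S hb hlt))
    · exact absurd hab.symm (Nat.ne_of_lt (wpp_rank_strict S ha hlt))

/-- Let `P` be a weak plane poset on `[n]` with `≪` the natural order and
let `g` be a weak linear extension of `P`. Then there exists a linear extension
`f ∈ Lin(P)` such that `g ⪯ f`. -/

theorem exists_lin_ext_above_weak_lin_ext {n : ℕ}
    (le1 le2 : Fin n → Fin n → Prop) (h : WeakPlanePoset le1 le2)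
    (hnat : ∀ i j : Fin n, (le1 j i ∨ le2 i j) ↔ i ≤ j)
    (g : Fin n → ℕ) (hg : IsWeakLinExt le1 le2 g) :
    ∃ f : Fin n → ℕ, IsLinExt le1 le2 f ∧ PWprec g f := by
  classical
  obtain ⟨hp1, hp2, h12, hrefl, htrans, htot⟩ := h
  obtain ⟨hgp, hg1, hg2⟩ := hg
  -- basic directional facts
  have hA : ∀ i j : Fin n, le1 i j → j ≤ i := fun i j hij => (hnat j i).mp (Or.inl hij)
  have hB : ∀ i j : Fin n, le2 i j → i ≤ j := fun i j hij => (hnat i j).mp (Or.inr hij)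
  -- equivalence facts
  have erefl : ∀ i : Fin n, WPPEquiv le1 le2 i i := fun i => ⟨hrefl i, hrefl i⟩
  have esymm : ∀ i j : Fin n, WPPEquiv le1 le2 i j → WPPEquiv le1 le2 j i :=
    fun i j hij => ⟨hij.2, hij.1⟩
  have etrans : ∀ i j k : Fin n, WPPEquiv le1 le2 i j → WPPEquiv le1 le2 j k →
      WPPEquiv le1 le2 i k :=
    fun i j k hij hjk => ⟨htrans _ _ _ hij.1 hjk.1, htrans _ _ _ hjk.2 hij.2⟩
  -- interval lemma: within a g-class, equivalence classes are intervals
  have hinterval : ∀ i k j : Fin n, i ≤ k → k ≤ j → g i = g j → g k = g j →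
      WPPEquiv le1 le2 i j → WPPEquiv le1 le2 i k := by
    intro i k j hik hkj hgij hgkj hij
    rcases htot i k with hik' | hki'
    · rcases hik' with h1 | h2
      · have heq : i = k := le_antisymm hik (hA i k h1)
        exact heq ▸ erefl i
      · rcases htot k j with hkj' | hjk'
        · rcases hkj' with h1 | h2'
          · have heq : j = k := le_antisymm (hA k j h1) hkj
            exact heq ▸ hij
          · exact ⟨Or.inr h2, htrans k j i (Or.inr h2') hij.2⟩
        · rcases hjk' with h1 | h2'
          · exact etrans i j k hij (hg2 j k h1 hgkj.symm)
          · have heq : j = k := le_antisymm (hB j k h2') hkj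
            exact heq ▸ hij
    · rcases hki' with h1 | h2
      · exact esymm k i (hg2 k i h1 (hgkj.trans hgij.symm))
      · have heq : k = i := le_antisymm (hB k i h2) hik
        exact heq ▸ erefl i
  -- the "minimal representative" function m
  let M : Fin n → Set ℕ := fun i =>
    {k : ℕ | ∃ hk : k < n, g ⟨k, hk⟩ = g i ∧ WPPEquiv le1 le2 ⟨k, hk⟩ i}
  have hMi : ∀ i : Fin n, (i : ℕ) ∈ M i := fun i => ⟨i.2, rfl, erefl i⟩
  let m : Fin n → ℕ := fun i => sInf (M i)
  have hmmem : ∀ i : Fin n, m i ∈ M i := fun i => Nat.sInf_mem ⟨(i : ℕ), hMi i⟩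
  have hmle : ∀ i : Fin n, m i ≤ (i : ℕ) := fun i => Nat.sInf_le (hMi i)
  have hmltn : ∀ i : Fin n, m i < n := fun i => lt_of_le_of_lt (hmle i) i.2
  have hmeq : ∀ i j : Fin n, g i = g j → WPPEquiv le1 le2 i j → m i = m j := by
    intro i j hgij hij
    have : M i = M j := by
      ext k
      constructor
      · rintro ⟨hk, hgk, hek⟩
        exact ⟨hk, hgk.trans hgij, etrans _ _ _ hek hij⟩
      · rintro ⟨hk, hgk, hek⟩
        exact ⟨hk, hgk.trans hgij.symm, etrans _ _ _ hek (esymm _ _ hij)⟩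
    simp only [m, this]
  have hmlt : ∀ i j : Fin n, i < j → g i = g j → ¬WPPEquiv le1 le2 i j → m i < m j := by
    intro i j hij hgij hne
    by_contra hcon
    push_neg at hcon
    obtain ⟨hk, hgk, hek⟩ := hmmem j
    have hq1 : (⟨m j, hk⟩ : Fin n) ≤ i := by
      rw [Fin.le_def]
      exact le_trans hcon (hmle i)
    have hq2 : WPPEquiv le1 le2 (⟨m j, hk⟩ : Fin n) i :=
      hinterval ⟨m j, hk⟩ i j hq1 hij.le hgk hgij hek
    exact hne (etrans i ⟨m j, hk⟩ j (esymm _ _ hq2) hek)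
  -- the key function
  let key : Fin n → ℕ := fun i => g i * n + m i
  have hle_aux : ∀ a b x y : ℕ, x < n → y < n → a * n + x ≤ b * n + y → a ≤ b := by
    intro a b x y hx hy hle
    by_contra hba
    push_neg at hba
    have h1 : (b + 1) * n ≤ a * n := Nat.mul_le_mul_right n hba
    have h2 : (b + 1) * n = b * n + n := by ring
    omega
  have hkey_g : ∀ i j : Fin n, key i ≤ key j → g i ≤ g j :=
    fun i j hij => hle_aux _ _ _ _ (hmltn i) (hmltn j) hij
  have hkey_glt : ∀ i j : Fin n, g i < g j → key i < key j := by
    intro i j hgij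
    have h1 : (g i + 1) * n ≤ g j * n := Nat.mul_le_mul_right n hgij
    have h2 : (g i + 1) * n = g i * n + n := by ring
    have h3 : m i < n := hmltn i
    simp only [key]
    omega
  have hkey_eq : ∀ i j : Fin n, key i = key j → g i = g j ∧ m i = m j := by
    intro i j hij
    have hg1' : g i ≤ g j := hkey_g i j hij.le
    have hg2' : g j ≤ g i := hkey_g j i hij.ge
    have hgij : g i = g j := le_antisymm hg1' hg2'
    refine ⟨hgij, ?_⟩
    simp only [key, hgij] at hij
    omega
  -- the rank / packing
  let S : Finset ℕ := Finset.univ.image key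
  let f : Fin n → ℕ := fun i => (S.filter (fun v => v ≤ key i)).card
  have hkeymem : ∀ i : Fin n, key i ∈ S := fun i =>
    Finset.mem_image.mpr ⟨i, Finset.mem_univ i, rfl⟩
  have hf_mono : ∀ i j : Fin n, key i ≤ key j → f i ≤ f j := by
    intro i j hij
    apply Finset.card_le_card
    intro x hx
    rw [Finset.mem_filter] at hx ⊢
    exact ⟨hx.1, hx.2.trans hij⟩
  have hf_strict : ∀ i j : Fin n, key i < key j → f i < f j :=
    fun i j hij => wpp_rank_strict S (hkeymem j) hij
  have hf_key_le : ∀ i j : Fin n, f i ≤ f j → key i ≤ key j := by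
    intro i j hij
    by_contra hcon
    push_neg at hcon
    exact absurd hij (not_le.mpr (hf_strict j i hcon))
  have hf_key_eq : ∀ i j : Fin n, f i = f j → key i = key j := by
    intro i j hij
    exact le_antisymm (hf_key_le i j hij.le) (hf_key_le j i hij.ge)
  refine ⟨f, ⟨⟨S.card, ?_⟩, ?_, ?_⟩, ?_, ?_⟩
  · -- IsPacked f
    have h1 : Finset.univ.image f = S.image (fun a => (S.filter (fun v => v ≤ a)).card) := by
      rw [show S.image (fun a => (S.filter (fun v => v ≤ a)).card)
            = (Finset.univ.image key).image (fun a => (S.filter (fun v => v ≤ a)).card) from rfl,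
          Finset.image_image]
      rfl
    have h2 : Finset.univ.image f = Finset.Icc 1 S.card := by
      rw [h1, wpp_rank_image_eq]
    calc Set.range f = ↑(Finset.univ.image f) := by
          rw [Finset.coe_image, Finset.coe_univ, Set.image_univ]
      _ = Set.Icc 1 S.card := by rw [h2, Finset.coe_Icc]
  · -- le1 i j → f i ≤ f j
    intro i j hij
    have hg' : g i ≤ g j := hg1 i j hij
    rcases lt_or_eq_of_le hg' with hlt | heq
    · exact (hf_strict i j (hkey_glt i j hlt)).le
    · have hequiv : WPPEquiv le1 le2 i j := hg2 i j hij heq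
      have : key i = key j := by
        simp only [key, heq, hmeq i j heq hequiv]
      exact (hf_mono i j this.le)
  · -- f i = f j → WPPEquiv
    intro i j hij
    obtain ⟨hgij, hmij⟩ := hkey_eq i j (hf_key_eq i j hij)
    obtain ⟨hki, hgki, heki⟩ := hmmem i
    obtain ⟨hkj, hgkj, hekj⟩ := hmmem j
    have hfin : (⟨m i, hki⟩ : Fin n) = ⟨m j, hkj⟩ := Fin.ext hmij
    exact etrans i ⟨m i, hki⟩ j (esymm _ _ heki) (hfin ▸ hekj)
  · -- PWprec first condition
    intro i j hij
    exact hkey_g i j (hf_key_le i j hij)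
  · -- PWprec second condition
    intro i j hij hfji
    have hkji : key j < key i := by
      by_contra hcon
      push_neg at hcon
      exact absurd hfji (not_lt.mpr (hf_mono i j hcon))
    have hgji : g j ≤ g i := hkey_g j i hkji.le
    rcases lt_or_eq_of_le hgji with hlt | heq
    · exact hlt
    · exfalso
      have hmji : m j < m i := by
        have := hkji
        simp only [key, heq] at this
        omega
      rcases Classical.em (WPPEquiv le1 le2 i j) with hequiv | hne
      · exact absurd (hmeq i j heq.symm hequiv) (by omega)
      · exact absurd (hmlt i j hij heq.symm hne) (by omega)
end

section
/- Let P be a weak plane poset on [n] (with ≪ the natural order) and let f, f' ∈ Lin(P) be two linear extensions of P. If there exists a packed word g of length n with g ⪯ f and g ⪯ f' (for the order ⪯ defined by: g ⪯ f iff (for all i, j, f(i) ≤ f(j) implies g(i) ≤ g(j)) and (for all i < j, f(i) > f(j) implies g(i) > g(j))), then f = f'. Consequently, the set of weak linear extensions of P is the disjoint union over f ∈ Lin(P) of the sets {g ∈ PW(n) : g ⪯ f}. -/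
namespace LinExtAux

variable {n : ℕ} {le1 le2 : Fin n → Fin n → Prop}

lemma le1_le (h : WeakPlanePoset le1 le2)
    (hnat : ∀ i j : Fin n, (le1 j i ∨ le2 i j) ↔ i ≤ j)
    {i j : Fin n} (hij : le1 i j) : j ≤ i := by
  by_contra hc
  push_neg at hc
  rcases (hnat i j).mpr hc.le with h1 | h2
  · exact absurd (h.1.antisymm i j hij h1) hc.ne
  · exact absurd (h.2.2.1 i j hij h2) hc.ne

lemma le2_le (h : WeakPlanePoset le1 le2)
    (hnat : ∀ i j : Fin n, (le1 j i ∨ le2 i j) ↔ i ≤ j)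
    {i j : Fin n} (hij : le2 i j) : i ≤ j := by
  by_contra hc
  push_neg at hc
  rcases (hnat j i).mpr hc.le with h1 | h2
  · exact absurd (h.2.2.1 i j h1 hij) hc.ne'
  · exact absurd (h.2.1.antisymm i j hij h2) hc.ne'

lemma wpp_refl (h : WeakPlanePoset le1 le2) (i : Fin n) : WPPEquiv le1 le2 i i :=
  ⟨Or.inl (h.1.refl i), Or.inl (h.1.refl i)⟩

lemma wpp_symm {i j : Fin n} (hij : WPPEquiv le1 le2 i j) : WPPEquiv le1 le2 j i :=
  ⟨hij.2, hij.1⟩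

lemma wpp_trans (h : WeakPlanePoset le1 le2) {i j k : Fin n}
    (hij : WPPEquiv le1 le2 i j) (hjk : WPPEquiv le1 le2 j k) : WPPEquiv le1 le2 i k :=
  ⟨h.2.2.2.2.1 i j k hij.1 hjk.1, h.2.2.2.2.1 k j i hjk.2 hij.2⟩

lemma equiv_parts (h : WeakPlanePoset le1 le2)
    (hnat : ∀ i j : Fin n, (le1 j i ∨ le2 i j) ↔ i ≤ j)
    {i j : Fin n} (hlt : i < j) (he : WPPEquiv le1 le2 i j) : le2 i j ∧ le1 j i := by
  obtain ⟨hij, hji⟩ := he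
  constructor
  · rcases hij with h1 | h2
    · exact absurd (le1_le h hnat h1) (not_le.mpr hlt)
    · exact h2
  · rcases hji with h1 | h2
    · exact h1
    · exact absurd (le2_le h hnat h2) (not_le.mpr hlt)

/-- Key monotonicity lemma for part 1. -/
lemma mono_of (h : WeakPlanePoset le1 le2)
    (hnat : ∀ i j : Fin n, (le1 j i ∨ le2 i j) ↔ i ≤ j)
    {f f' g : Fin n → ℕ} (hf : IsLinExt le1 le2 f) (hf' : IsLinExt le1 le2 f')
    (hgf : PWprec g f) (hgf' : PWprec g f')
    {i j : Fin n} (hle : f i ≤ f j) : f' i ≤ f' j := by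
  by_contra hc
  push_neg at hc
  have hgij : g i ≤ g j := hgf.1 i j hle
  have hgji : g j ≤ g i := hgf'.1 j i hc.le
  rcases lt_trichotomy i j with hij | rfl | hji
  · have := hgf'.2 i j hij hc
    omega
  · exact absurd hc (lt_irrefl _)
  · rcases eq_or_lt_of_le hle with heq | hlt
    · have he := hf.2.2 i j heq
      have hp := equiv_parts h hnat hji (wpp_symm he)
      exact absurd (hf'.2.1 i j hp.2) (not_le.mpr hc)
    · have := hgf.2 j i hji hlt
      omega

/-- A packed word is determined by its comparison quasi-order. -/
lemma packed_ext {f f' : Fin n → ℕ} (hf : IsPacked f) (hf' : IsPacked f')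
    (hiff : ∀ i j, f i ≤ f j ↔ f' i ≤ f' j) : f = f' := by
  suffices H : ∀ (u v : Fin n → ℕ), IsPacked u → IsPacked v →
      (∀ i j, u i ≤ u j ↔ v i ≤ v j) → ∀ i, u i ≤ v i by
    funext i
    exact le_antisymm (H f f' hf hf' hiff i)
      (H f' f hf' hf (fun i j => (hiff i j).symm) i)
  rintro u v ⟨k, hk⟩ ⟨k', hk'⟩ hiff i
  have hu : ∀ i, u i ∈ Set.Icc 1 k := fun i => hk ▸ Set.mem_range_self i
  have hv : ∀ i, v i ∈ Set.Icc 1 k' := fun i => hk' ▸ Set.mem_range_self i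
  have main : ∀ m (i : Fin n), u i = m → u i ≤ v i := by
    intro m
    induction m using Nat.strong_induction_on with
    | _ m ih =>
      intro i him
      rcases Nat.lt_or_ge m 2 with h2 | h2
      · have h1 := (hv i).1
        have := (hu i).1
        omega
      · have hmk : u i ≤ k := (hu i).2
        have hmem : (m - 1) ∈ Set.Icc 1 k := ⟨by omega, by omega⟩
        rw [← hk] at hmem
        obtain ⟨j, hj⟩ := hmem
        have hlt : u j < u i := by omega
        have hvlt : v j < v i := by
          have h1 : ¬ v i ≤ v j := fun hh => absurd ((hiff i j).mpr hh) (by omega)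
          omega
        have := ih (m - 1) (by omega) j hj
        omega
  exact main (u i) i rfl

/-! ### Construction of the linear extension above a weak linear extension -/

/-- the equivalence `g i = g j` and `i ≡ j`. -/
def Eqv (le1 le2 : Fin n → Fin n → Prop) (g : Fin n → ℕ) (i j : Fin n) : Prop :=
  g i = g j ∧ WPPEquiv le1 le2 i j

/-- the strict order refining `g`. -/
def Ltv (le1 le2 : Fin n → Fin n → Prop) (g : Fin n → ℕ) (i j : Fin n) : Prop :=
  g i < g j ∨ (g i = g j ∧ i < j ∧ ¬ Eqv le1 le2 g i j)

/-- `i` is the minimum of its `Eqv`-class. -/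
def MinRep (le1 le2 : Fin n → Fin n → Prop) (g : Fin n → ℕ) (i : Fin n) : Prop :=
  ∀ j, Eqv le1 le2 g i j → i ≤ j

/-- the candidate linear extension above `g`. -/
noncomputable def F0 (le1 le2 : Fin n → Fin n → Prop) (g : Fin n → ℕ) (i : Fin n) : ℕ :=
  {j | MinRep le1 le2 g j ∧ (Ltv le1 le2 g j i ∨ Eqv le1 le2 g j i)}.ncard

variable {g : Fin n → ℕ}

lemma eqv_refl (h : WeakPlanePoset le1 le2) (i : Fin n) : Eqv le1 le2 g i i :=
  ⟨rfl, wpp_refl h i⟩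

lemma eqv_symm {i j : Fin n} (hij : Eqv le1 le2 g i j) : Eqv le1 le2 g j i :=
  ⟨hij.1.symm, wpp_symm hij.2⟩

lemma eqv_trans (h : WeakPlanePoset le1 le2) {i j k : Fin n}
    (hij : Eqv le1 le2 g i j) (hjk : Eqv le1 le2 g j k) : Eqv le1 le2 g i k :=
  ⟨hij.1.trans hjk.1, wpp_trans h hij.2 hjk.2⟩

/-- convexity of equivalence classes inside a level set of `g`. -/
lemma eqv_convex (h : WeakPlanePoset le1 le2)
    (hnat : ∀ i j : Fin n, (le1 j i ∨ le2 i j) ↔ i ≤ j)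
    (hw : IsWeakLinExt le1 le2 g) {i j k : Fin n}
    (hgij : g i = g j) (h1 : i < j) (h2 : j < k)
    (hik : Eqv le1 le2 g i k) : Eqv le1 le2 g i j := by
  obtain ⟨hgik, heik⟩ := hik
  have hgjk : g j = g k := by omega
  rcases (hnat i j).mpr h1.le with hji | hij2
  · -- le1 j i, with g j = g i : j ≡ i
    have := hw.2.2 j i hji hgij.symm
    exact ⟨hgij, wpp_symm this⟩
  · rcases (hnat j k).mpr h2.le with hkj | hjk2
    · -- le1 k j, g k = g j : k ≡ j
      have hkj' := hw.2.2 k j hkj hgjk.symm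
      exact ⟨hgij, wpp_trans h heik hkj'⟩
    · -- le2 i j and le2 j k
      have hij : le1 i j ∨ le2 i j := Or.inr hij2
      have hjk : le1 j k ∨ le2 j k := Or.inr hjk2
      have hki : le1 k i ∨ le2 k i := heik.2
      have hji : le1 j i ∨ le2 j i := h.2.2.2.2.1 j k i hjk hki
      exact ⟨hgij, hij, hji⟩

lemma ltv_not_eqv {i j : Fin n} (hl : Ltv le1 le2 g i j) : ¬ Eqv le1 le2 g i j := by
  rcases hl with h1 | ⟨_, _, h3⟩
  · intro he
    have := he.1
    omega
  · exact h3

lemma ltv_asymm {i j : Fin n} (hl : Ltv le1 le2 g i j) (hl' : Ltv le1 le2 g j i) : False := by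
  rcases hl with h1 | ⟨e1, l1, _⟩ <;> rcases hl' with h2 | ⟨e2, l2, _⟩ <;> omega

lemma ltv_trichotomy (h : WeakPlanePoset le1 le2) (i j : Fin n) :
    Ltv le1 le2 g i j ∨ Eqv le1 le2 g i j ∨ Ltv le1 le2 g j i := by
  rcases lt_trichotomy (g i) (g j) with hg | hg | hg
  · exact Or.inl (Or.inl hg)
  · rcases lt_trichotomy i j with hi | rfl | hi
    · by_cases he : Eqv le1 le2 g i j
      · exact Or.inr (Or.inl he)
      · exact Or.inl (Or.inr ⟨hg, hi, he⟩)
    · exact Or.inr (Or.inl (eqv_refl h i))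
    · by_cases he : Eqv le1 le2 g j i
      · exact Or.inr (Or.inl (eqv_symm he))
      · exact Or.inr (Or.inr (Or.inr ⟨hg.symm, hi, he⟩))
  · exact Or.inr (Or.inr (Or.inl hg))

lemma ltv_eqv (h : WeakPlanePoset le1 le2)
    (hnat : ∀ i j : Fin n, (le1 j i ∨ le2 i j) ↔ i ≤ j)
    (hw : IsWeakLinExt le1 le2 g) {i j k : Fin n}
    (hl : Ltv le1 le2 g i j) (he : Eqv le1 le2 g j k) : Ltv le1 le2 g i k := by
  rcases hl with h1 | ⟨e1, lij, hne⟩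
  · exact Or.inl (he.1 ▸ h1)
  · have hgik : g i = g k := e1.trans he.1
    have hnik : ¬ Eqv le1 le2 g i k := fun hik =>
      hne (eqv_trans h hik (eqv_symm he))
    have hlt : i < k := by
      rcases lt_trichotomy i k with h' | rfl | h'
      · exact h'
      · exact absurd (eqv_refl h i) hnik
      · -- k < i < j, Eqv k j, g k = g i
        have hkj : Eqv le1 le2 g k j := eqv_symm he
        have hki := eqv_convex h hnat hw hgik.symm h' lij hkj
        exact absurd (eqv_trans h (eqv_symm hki) hkj) hne
    exact Or.inr ⟨hgik, hlt, hnik⟩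

lemma eqv_ltv (h : WeakPlanePoset le1 le2)
    (hnat : ∀ i j : Fin n, (le1 j i ∨ le2 i j) ↔ i ≤ j)
    (hw : IsWeakLinExt le1 le2 g) {i j k : Fin n}
    (he : Eqv le1 le2 g i j) (hl : Ltv le1 le2 g j k) : Ltv le1 le2 g i k := by
  rcases hl with h1 | ⟨e1, ljk, hne⟩
  · exact Or.inl (he.1 ▸ h1)
  · have hgik : g i = g k := he.1.trans e1
    have hnik : ¬ Eqv le1 le2 g i k := fun hik =>
      hne (eqv_trans h (eqv_symm he) hik)
    have hlt : i < k := by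
      rcases lt_trichotomy i k with h' | rfl | h'
      · exact h'
      · exact absurd (eqv_refl h i) hnik
      · -- j < k < i, Eqv j i, g j = g k
        have := eqv_convex h hnat hw e1 ljk h' (eqv_symm he)
        exact absurd this hne
    exact Or.inr ⟨hgik, hlt, hnik⟩

lemma ltv_trans (h : WeakPlanePoset le1 le2)
    (hnat : ∀ i j : Fin n, (le1 j i ∨ le2 i j) ↔ i ≤ j)
    (hw : IsWeakLinExt le1 le2 g) {i j k : Fin n}
    (hl : Ltv le1 le2 g i j) (hl' : Ltv le1 le2 g j k) : Ltv le1 le2 g i k := by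
  rcases hl with h1 | ⟨e1, lij, hne1⟩
  · rcases hl' with h2 | ⟨e2, ljk, hne2⟩
    · exact Or.inl (h1.trans h2)
    · exact Or.inl (e2 ▸ h1)
  · rcases hl' with h2 | ⟨e2, ljk, hne2⟩
    · exact Or.inl (e1 ▸ h2)
    · have hgik : g i = g k := e1.trans e2
      have hnik : ¬ Eqv le1 le2 g i k := fun hik => by
        exact hne1 (eqv_convex h hnat hw e1 lij ljk hik)
      exact Or.inr ⟨hgik, lt_trans lij ljk, hnik⟩

lemma exists_minrep (h : WeakPlanePoset le1 le2) (i : Fin n) :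
    ∃ m, MinRep le1 le2 g m ∧ Eqv le1 le2 g m i := by
  classical
  obtain ⟨m, hm, hmin⟩ := Finset.exists_min_image
    (Finset.univ.filter fun x => Eqv le1 le2 g x i) id
    ⟨i, by simp [eqv_refl h i]⟩
  simp only [Finset.mem_filter, Finset.mem_univ, true_and] at hm
  refine ⟨m, ?_, hm⟩
  intro j hmj
  have : j ∈ Finset.univ.filter fun x => Eqv le1 le2 g x i := by
    simp only [Finset.mem_filter, Finset.mem_univ, true_and]
    exact eqv_trans h (eqv_symm hmj) hm
  exact hmin j this

lemma minrep_unique {a b : Fin n} (ha : MinRep le1 le2 g a) (hb : MinRep le1 le2 g b)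
    (hab : Eqv le1 le2 g a b) : a = b :=
  le_antisymm (ha b hab) (hb a (eqv_symm hab))

end LinExtAux
namespace LinExtAux

variable {n : ℕ} {le1 le2 : Fin n → Fin n → Prop} {g : Fin n → ℕ}

/-- the set whose cardinality is `F0 g i`. -/
def Sv (le1 le2 : Fin n → Fin n → Prop) (g : Fin n → ℕ) (i : Fin n) : Set (Fin n) :=
  {j | MinRep le1 le2 g j ∧ (Ltv le1 le2 g j i ∨ Eqv le1 le2 g j i)}

lemma f0_def (i : Fin n) : F0 le1 le2 g i = (Sv le1 le2 g i).ncard := rfl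

lemma f0_eq_of_eqv (h : WeakPlanePoset le1 le2)
    (hnat : ∀ i j : Fin n, (le1 j i ∨ le2 i j) ↔ i ≤ j)
    (hw : IsWeakLinExt le1 le2 g) {i j : Fin n}
    (he : Eqv le1 le2 g i j) : F0 le1 le2 g i = F0 le1 le2 g j := by
  rw [f0_def, f0_def]
  congr 1
  ext m
  simp only [Sv, Set.mem_setOf_eq]
  constructor
  · rintro ⟨hm, hl | heq⟩
    · exact ⟨hm, Or.inl (ltv_eqv h hnat hw hl he)⟩
    · exact ⟨hm, Or.inr (eqv_trans h heq he)⟩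
  · rintro ⟨hm, hl | heq⟩
    · exact ⟨hm, Or.inl (ltv_eqv h hnat hw hl (eqv_symm he))⟩
    · exact ⟨hm, Or.inr (eqv_trans h heq (eqv_symm he))⟩

lemma f0_lt_of_ltv (h : WeakPlanePoset le1 le2)
    (hnat : ∀ i j : Fin n, (le1 j i ∨ le2 i j) ↔ i ≤ j)
    (hw : IsWeakLinExt le1 le2 g) {i j : Fin n}
    (hl : Ltv le1 le2 g i j) : F0 le1 le2 g i < F0 le1 le2 g j := by
  rw [f0_def, f0_def]
  apply Set.ncard_lt_ncard ?_ (Set.toFinite _)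
  constructor
  · rintro m ⟨hm, hml | hme⟩
    · exact ⟨hm, Or.inl (ltv_trans h hnat hw hml hl)⟩
    · exact ⟨hm, Or.inl (eqv_ltv h hnat hw hme hl)⟩
  · intro hsub
    obtain ⟨m, hmr, hme⟩ := exists_minrep h (g := g) j
    obtain ⟨_, hml | hme'⟩ := hsub ⟨hmr, Or.inr hme⟩
    · exact ltv_asymm hl (eqv_ltv h hnat hw (eqv_symm hme) hml)
    · exact ltv_not_eqv hl (eqv_trans h (eqv_symm hme') hme)

lemma f0_pos (h : WeakPlanePoset le1 le2) (i : Fin n) : 1 ≤ F0 le1 le2 g i := by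
  rw [f0_def]
  rw [Nat.one_le_iff_ne_zero, Ne, Set.ncard_eq_zero (Set.toFinite _)]
  intro hempty
  obtain ⟨m, hmr, hme⟩ := exists_minrep h (g := g) i
  exact absurd (Set.eq_empty_iff_forall_notMem.mp hempty m) (fun hh => hh ⟨hmr, Or.inr hme⟩)

lemma f0_le_card (i : Fin n) :
    F0 le1 le2 g i ≤ {j | MinRep le1 le2 g j}.ncard := by
  rw [f0_def]
  exact Set.ncard_le_ncard (fun m hm => hm.1) (Set.toFinite _)

lemma eqv_of_f0_eq (h : WeakPlanePoset le1 le2)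
    (hnat : ∀ i j : Fin n, (le1 j i ∨ le2 i j) ↔ i ≤ j)
    (hw : IsWeakLinExt le1 le2 g) {i j : Fin n}
    (he : F0 le1 le2 g i = F0 le1 le2 g j) : Eqv le1 le2 g i j := by
  rcases ltv_trichotomy h (g := g) i j with hl | heq | hl
  · exact absurd he (ne_of_lt (f0_lt_of_ltv h hnat hw hl))
  · exact heq
  · exact absurd he.symm (ne_of_lt (f0_lt_of_ltv h hnat hw hl))

lemma ltv_of_f0_lt (h : WeakPlanePoset le1 le2)
    (hnat : ∀ i j : Fin n, (le1 j i ∨ le2 i j) ↔ i ≤ j)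
    (hw : IsWeakLinExt le1 le2 g) {i j : Fin n}
    (hlt : F0 le1 le2 g i < F0 le1 le2 g j) : Ltv le1 le2 g i j := by
  rcases ltv_trichotomy h (g := g) i j with hl | heq | hl
  · exact hl
  · exact absurd (f0_eq_of_eqv h hnat hw heq) (ne_of_lt hlt)
  · exact absurd (f0_lt_of_ltv h hnat hw hl) (by omega)

lemma f0_descend (h : WeakPlanePoset le1 le2)
    (hnat : ∀ i j : Fin n, (le1 j i ∨ le2 i j) ↔ i ≤ j)
    (hw : IsWeakLinExt le1 le2 g) {i : Fin n}
    (h2 : 2 ≤ F0 le1 le2 g i) : ∃ j, F0 le1 le2 g j + 1 = F0 le1 le2 g i := by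
  classical
  set T : Finset (Fin n) :=
    Finset.univ.filter (fun x => MinRep le1 le2 g x ∧ Ltv le1 le2 g x i) with hT
  have hTne : T.Nonempty := by
    by_contra hne
    rw [Finset.not_nonempty_iff_eq_empty] at hne
    have hsub : Sv le1 le2 g i ⊆ {x | MinRep le1 le2 g x ∧ Eqv le1 le2 g x i} := by
      rintro m ⟨hm, hml | hme⟩
      · exact absurd (Finset.mem_filter.mpr ⟨Finset.mem_univ m, hm, hml⟩)
          (hne ▸ Finset.notMem_empty m)
      · exact ⟨hm, hme⟩
    have hss : {x | MinRep le1 le2 g x ∧ Eqv le1 le2 g x i}.ncard ≤ 1 := by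
      rw [Set.ncard_le_one_iff (Set.toFinite _)]
      intro a b ha hb
      exact minrep_unique ha.1 hb.1 (eqv_trans h ha.2 (eqv_symm hb.2))
    have := Set.ncard_le_ncard hsub (Set.toFinite _)
    rw [← f0_def] at this
    omega
  obtain ⟨j, hjT, hjmax⟩ := Finset.exists_max_image T (F0 le1 le2 g) hTne
  rw [hT, Finset.mem_filter] at hjT
  obtain ⟨-, hjr, hjl⟩ := hjT
  have hlt : F0 le1 le2 g j < F0 le1 le2 g i := f0_lt_of_ltv h hnat hw hjl
  have hle : F0 le1 le2 g i ≤ F0 le1 le2 g j + 1 := by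
    have hsub : Sv le1 le2 g i ⊆
        Sv le1 le2 g j ∪ {x | MinRep le1 le2 g x ∧ Eqv le1 le2 g x i} := by
      rintro m ⟨hm, hml | hme⟩
      · rcases ltv_trichotomy h (g := g) m j with hl' | he' | hl'
        · exact Or.inl ⟨hm, Or.inl hl'⟩
        · exact Or.inl ⟨hm, Or.inr he'⟩
        · have hmT : m ∈ T := Finset.mem_filter.mpr ⟨Finset.mem_univ m, hm, hml⟩
          have := hjmax m hmT
          exact absurd (f0_lt_of_ltv h hnat hw hl') (by omega)
      · exact Or.inr ⟨hm, hme⟩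
    have h1 := Set.ncard_le_ncard hsub (Set.toFinite _)
    have h2' := Set.ncard_union_le (Sv le1 le2 g j)
      {x | MinRep le1 le2 g x ∧ Eqv le1 le2 g x i}
    have hss : {x | MinRep le1 le2 g x ∧ Eqv le1 le2 g x i}.ncard ≤ 1 := by
      rw [Set.ncard_le_one_iff (Set.toFinite _)]
      intro a b ha hb
      exact minrep_unique ha.1 hb.1 (eqv_trans h ha.2 (eqv_symm hb.2))
    rw [f0_def, f0_def]
    calc (Sv le1 le2 g i).ncard ≤ _ := h1
      _ ≤ _ := h2'
      _ ≤ (Sv le1 le2 g j).ncard + 1 := by omega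
  exact ⟨j, by omega⟩

lemma f0_packed (h : WeakPlanePoset le1 le2)
    (hnat : ∀ i j : Fin n, (le1 j i ∨ le2 i j) ↔ i ≤ j)
    (hw : IsWeakLinExt le1 le2 g) : IsPacked (F0 le1 le2 g) := by
  classical
  set k := {j | MinRep le1 le2 g j}.ncard with hk
  refine ⟨k, ?_⟩
  apply Set.eq_of_subset_of_subset
  · rintro v ⟨i, rfl⟩
    exact ⟨f0_pos h i, f0_le_card i⟩
  · -- first : if k ≥ 1 there is i with F0 i = k
    have hmax : 1 ≤ k → ∃ i, F0 le1 le2 g i = k := by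
      intro hk1
      have hMne : {j | MinRep le1 le2 g j}.Nonempty := by
        rw [← Set.ncard_pos (Set.toFinite _)] at *
        omega
      obtain ⟨m0, hm0⟩ := hMne
      have huniv : (Finset.univ : Finset (Fin n)).Nonempty := ⟨m0, Finset.mem_univ m0⟩
      obtain ⟨i, -, hmax⟩ := Finset.exists_max_image Finset.univ (F0 le1 le2 g) huniv
      refine ⟨i, ?_⟩
      rw [f0_def, hk]
      congr 1
      apply Set.eq_of_subset_of_subset (fun m hm => hm.1)
      intro m hm
      rcases ltv_trichotomy h (g := g) m i with hl | he | hl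
      · exact ⟨hm, Or.inl hl⟩
      · exact ⟨hm, Or.inr he⟩
      · have := f0_lt_of_ltv h hnat hw hl
        have := hmax m (Finset.mem_univ m)
        omega
    have H : ∀ d m, 1 ≤ m → m + d = k → ∃ i, F0 le1 le2 g i = m := by
      intro d
      induction d with
      | zero =>
        intro m h1 h2
        obtain ⟨i, hi⟩ := hmax (by omega)
        exact ⟨i, by omega⟩
      | succ d ih =>
        intro m h1 h2
        obtain ⟨i, hi⟩ := ih (m + 1) (by omega) (by omega)
        obtain ⟨j, hj⟩ := f0_descend h hnat hw (show 2 ≤ F0 le1 le2 g i by omega)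
        exact ⟨j, by omega⟩
    rintro v ⟨h1, h2⟩
    obtain ⟨i, hi⟩ := H (k - v) v h1 (by omega)
    exact ⟨i, hi⟩

lemma f0_linext (h : WeakPlanePoset le1 le2)
    (hnat : ∀ i j : Fin n, (le1 j i ∨ le2 i j) ↔ i ≤ j)
    (hw : IsWeakLinExt le1 le2 g) : IsLinExt le1 le2 (F0 le1 le2 g) := by
  refine ⟨f0_packed h hnat hw, ?_, ?_⟩
  · intro i j hij
    have hg := hw.2.1 i j hij
    rcases eq_or_lt_of_le hg with heq | hlt
    · have he := hw.2.2 i j hij heq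
      exact le_of_eq (f0_eq_of_eqv h hnat hw ⟨heq, he⟩)
    · exact le_of_lt (f0_lt_of_ltv h hnat hw (Or.inl hlt))
  · intro i j heq
    exact (eqv_of_f0_eq h hnat hw heq).2

lemma f0_prec (h : WeakPlanePoset le1 le2)
    (hnat : ∀ i j : Fin n, (le1 j i ∨ le2 i j) ↔ i ≤ j)
    (hw : IsWeakLinExt le1 le2 g) : PWprec g (F0 le1 le2 g) := by
  constructor
  · intro i j hle
    by_contra hc
    push_neg at hc
    have hl : Ltv le1 le2 g j i := Or.inl hc
    have := f0_lt_of_ltv h hnat hw hl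
    omega
  · intro i j hij hlt
    have hl := ltv_of_f0_lt h hnat hw hlt
    rcases hl with h1 | ⟨_, h2, _⟩
    · exact h1
    · exact absurd hij (not_lt.mpr h2.le)

end LinExtAux
/-- Let `P` be a weak plane poset on `[n]` with `≪` the natural order and
let `f, f' ∈ Lin(P)`. If some packed word `g` of length `n` satisfies `g ⪯ f` and
`g ⪯ f'`, then `f = f'`. Consequently, the set of weak linear extensions of `P` is the
disjoint union over `f ∈ Lin(P)` of the sets `{g ∈ PW(n) : g ⪯ f}`: a packed word `g`
is a weak linear extension of `P` iff there is a unique `f ∈ Lin(P)` with `g ⪯ f`. -/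
theorem lin_ext_above_is_unique {n : ℕ}
    (le1 le2 : Fin n → Fin n → Prop) (h : WeakPlanePoset le1 le2)
    (hnat : ∀ i j : Fin n, (le1 j i ∨ le2 i j) ↔ i ≤ j)
    (f f' : Fin n → ℕ) (hf : IsLinExt le1 le2 f) (hf' : IsLinExt le1 le2 f')
    (g : Fin n → ℕ) (hg : IsPacked g) (hgf : PWprec g f) (hgf' : PWprec g f') :
    f = f' ∧
      ∀ g' : Fin n → ℕ, IsPacked g' →
        (IsWeakLinExt le1 le2 g' ↔
          ∃! f₀ : Fin n → ℕ, IsLinExt le1 le2 f₀ ∧ PWprec g' f₀) := by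
  have uniq : ∀ (g₀ u v : Fin n → ℕ), IsLinExt le1 le2 u → IsLinExt le1 le2 v →
      PWprec g₀ u → PWprec g₀ v → u = v := by
    intro g₀ u v hu hv hgu hgv
    apply LinExtAux.packed_ext hu.1 hv.1
    intro i j
    exact ⟨fun hh => LinExtAux.mono_of h hnat hu hv hgu hgv hh,
      fun hh => LinExtAux.mono_of h hnat hv hu hgv hgu hh⟩
  refine ⟨uniq g f f' hf hf' hgf hgf', ?_⟩
  intro g' hg'
  constructor
  · intro hw
    refine ⟨LinExtAux.F0 le1 le2 g',
      ⟨LinExtAux.f0_linext h hnat hw, LinExtAux.f0_prec h hnat hw⟩, ?_⟩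
    rintro f₁ ⟨hf₁, hp₁⟩
    exact uniq g' f₁ (LinExtAux.F0 le1 le2 g') hf₁ (LinExtAux.f0_linext h hnat hw)
      hp₁ (LinExtAux.f0_prec h hnat hw)
  · rintro ⟨f₀, ⟨hf₀, hp₀⟩, -⟩
    refine ⟨hg', fun i j hij => hp₀.1 i j (hf₀.2.1 i j hij), ?_⟩
    intro i j hij heq
    have hji : j ≤ i := LinExtAux.le1_le h hnat hij
    rcases eq_or_lt_of_le hji with rfl | hlt
    · exact LinExtAux.wpp_refl h _
    · have h1 : f₀ i ≤ f₀ j := hf₀.2.1 i j hij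
      have h2 : f₀ j ≤ f₀ i := by
        by_contra hc
        push_neg at hc
        have := hp₀.2 j i hlt hc
        omega
      exact hf₀.2.2 i j (le_antisymm h1 h2)
end
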